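/- arXiv:1904.08357 — 4 statements merged into one kernel-verified Lean document; each statement's English description precedes it below -/
import Mathlib

section
/- In an adhesive category, pushout complements along monomorphisms are unique up to isomorphism: given a monomorphism a : A → C and a morphism c : C → D, any two pushout complements (i.e. factorizations A → B → D and A → B' → D such that the resulting squares with c and a are pushouts) have isomorphic middle objects B ≅ B', compatibly with the morphisms. -/
open CategoryTheory

/-- Auxiliary lemma: if `P` is the pullback of the two pushout complements over `D`,
then the projection to the first complement is an isomorphism. -/
lemma stmt_6_aux {𝒞 : Type*} [Category 𝒞] [Adhesive 𝒞] {A B B' C D P : 𝒞}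
    (a : A ⟶ C) [Mono a] (c : C ⟶ D)
    (f : A ⟶ B) (g : B ⟶ D) (f' : A ⟶ B') (g' : B' ⟶ D)
    (H : IsPushout a f c g) (H' : IsPushout a f' c g')
    (q : P ⟶ B) (q' : P ⟶ B') (hP : IsPullback q q' g g')
    (h : A ⟶ P) (hq : h ≫ q = f) (hq' : h ≫ q' = f') : IsIso q := by
  have HPB : IsPullback a f c g := Adhesive.isPullback_of_isPushout_of_mono_left H
  -- the "left face" of the cube is a pullback
  have left : IsPullback h (𝟙 A) q' f' := by
    have sq : CommSq h (𝟙 A) q' f' := ⟨by simpa using hq'⟩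
    refine IsPullback.of_isLimit' sq ?_
    refine Limits.PullbackCone.IsLimit.mk _
      (fun s => s.snd) (fun s => ?_) (fun s => by simp) (fun s m hm₁ hm₂ => by simpa using hm₂)
    · -- need : s.snd ≫ h = s.fst
      have key : s.snd ≫ f = s.fst ≫ q := by
        have w : (s.snd ≫ a) ≫ c = (s.fst ≫ q) ≫ g := by
          have e1 : s.fst ≫ q ≫ g = s.fst ≫ q' ≫ g' := by rw [hP.w]
          have e2 : s.fst ≫ q' = s.snd ≫ f' := s.condition
          simp only [Category.assoc, e1]
          rw [reassoc_of% e2, ← H'.w]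
        have t := HPB.lift (s.snd ≫ a) (s.fst ≫ q) w
        have ht₁ : HPB.lift _ _ w ≫ a = s.snd ≫ a := HPB.lift_fst _ _ w
        have ht₂ : HPB.lift _ _ w ≫ f = s.fst ≫ q := HPB.lift_snd _ _ w
        have : HPB.lift (s.snd ≫ a) (s.fst ≫ q) w = s.snd := by
          rwa [← cancel_mono a]
        rw [← this, ht₂]
      apply hP.hom_ext
      · simp [hq, key]
      · simp only [Category.assoc, hq']
        exact s.condition.symm
  -- the "back face" of the cube is a pullback (a is mono)
  have back : IsPullback (𝟙 A) (𝟙 A) a a := IsKernelPair.id_of_mono a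
  -- apply the van Kampen property of H'
  have vk := Adhesive.van_kampen H'
  have top : IsPushout (𝟙 A) h f q := by
    refine (vk (𝟙 A) h f q (𝟙 A) a q' g back left ⟨by simp [HPB.w]⟩ ⟨hP.w⟩
      ⟨by simp [hq]⟩).mpr ⟨HPB.flip, hP⟩
  -- a pushout along an identity gives an isomorphism
  refine ⟨top.desc h (𝟙 P) (by simp), top.inr_desc _ _ _, ?_⟩
  apply top.hom_ext
  · simp [reassoc_of% hq, hq]
  · simp [reassoc_of% hq]

/-- In an adhesive category, pushout complements along monomorphisms are unique up
to isomorphism. -/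
theorem stmt_6 {𝒞 : Type*} [Category 𝒞] [Adhesive 𝒞] {A B B' C D : 𝒞}
    (a : A ⟶ C) [Mono a] (c : C ⟶ D)
    (f : A ⟶ B) (g : B ⟶ D) (f' : A ⟶ B') (g' : B' ⟶ D)
    (H : IsPushout a f c g) (H' : IsPushout a f' c g') :
    ∃ e : B ≅ B', f ≫ e.hom = f' ∧ e.hom ≫ g' = g := by
  have : Mono g := Adhesive.mono_of_isPushout_of_mono_left H
  have : Mono g' := Adhesive.mono_of_isPushout_of_mono_left H'
  have hPB : IsPullback (Limits.pullback.fst g g') (Limits.pullback.snd g g') g g' :=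
    IsPullback.of_hasPullback g g'
  have wff' : f ≫ g = f' ≫ g' := by rw [← H.w, ← H'.w]
  have h := hPB.lift f f' wff'
  have hq : hPB.lift f f' wff' ≫ Limits.pullback.fst g g' = f := hPB.lift_fst _ _ _
  have hq' : hPB.lift f f' wff' ≫ Limits.pullback.snd g g' = f' := hPB.lift_snd _ _ _
  have i1 : IsIso (Limits.pullback.fst g g') :=
    stmt_6_aux a c f g f' g' H H' _ _ hPB _ hq hq'
  have i2 : IsIso (Limits.pullback.snd g g') :=
    stmt_6_aux a c f' g' f g H' H _ _ hPB.flip _ hq' hq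
  refine ⟨(asIso (Limits.pullback.fst g g')).symm ≪≫ asIso (Limits.pullback.snd g g'), ?_, ?_⟩
  · simp only [Iso.trans_hom, Iso.symm_hom, asIso_inv, asIso_hom]
    conv_lhs => rw [← hq]
    simp only [Category.assoc, IsIso.hom_inv_id_assoc]
    exact hq'
  · simp only [Iso.trans_hom, Iso.symm_hom, asIso_inv, asIso_hom, Category.assoc]
    rw [← hPB.w]
    simp
end

section
/- Effective unions in adhesive categories: in an adhesive category, given a commutative diagram in which an inner square is a pushout, the exterior square is a pullback, and all morphisms except a designated comparison morphism x are monomorphisms, the morphism x is also a monomorphism. -/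
open CategoryTheory Limits

section Aux

variable {𝒞 : Type*} [Category 𝒞] [Adhesive 𝒞]

/-- Pulling back a pushout along a morphism into the pushout object yields a pushout
(stability of pushouts along monos in adhesive categories). -/
lemma stmt_8_decomp {A B C D : 𝒞} (a : A ⟶ B) (b : A ⟶ C) (c : B ⟶ D) (d : C ⟶ D)
    [Mono a] [Mono b] [Mono c] [Mono d] (hpo : IsPushout a b c d)
    {T : 𝒞} (s : T ⟶ D) :
    IsPushout
      ((IsPullback.of_hasPullback c s).lift (pullback.fst (a ≫ c) s ≫ a)
        (pullback.snd (a ≫ c) s) (by rw [Category.assoc, pullback.condition]))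
      ((IsPullback.of_hasPullback d s).lift (pullback.fst (a ≫ c) s ≫ b)
        (pullback.snd (a ≫ c) s)
        (by rw [Category.assoc, ← hpo.w, pullback.condition]))
      (pullback.snd c s) (pullback.snd d s) := by
  set f₂ := (IsPullback.of_hasPullback c s).lift (pullback.fst (a ≫ c) s ≫ a)
    (pullback.snd (a ≫ c) s) (by rw [Category.assoc, pullback.condition]) with hf₂
  set g₂ := (IsPullback.of_hasPullback d s).lift (pullback.fst (a ≫ c) s ≫ b)
    (pullback.snd (a ≫ c) s)
    (by rw [Category.assoc, ← hpo.w, pullback.condition]) with hg₂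
  have hback₁ : IsPullback f₂ (pullback.fst (a ≫ c) s) (pullback.fst c s) a := by
    apply IsPullback.of_right _ _ ((IsPullback.of_hasPullback c s).flip)
    · have : f₂ ≫ pullback.snd c s = pullback.snd (a ≫ c) s :=
        (IsPullback.of_hasPullback c s).lift_snd _ _ _
      rw [this]
      exact (IsPullback.of_hasPullback (a ≫ c) s).flip
    · exact ((IsPullback.of_hasPullback c s).lift_fst _ _ _)
  have hback₂ : IsPullback g₂ (pullback.fst (a ≫ c) s) (pullback.fst d s) b := by
    apply IsPullback.of_right _ _ ((IsPullback.of_hasPullback d s).flip)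
    · have : g₂ ≫ pullback.snd d s = pullback.snd (a ≫ c) s :=
        (IsPullback.of_hasPullback d s).lift_snd _ _ _
      rw [this]
      rw [← hpo.w]
      exact (IsPullback.of_hasPullback (a ≫ c) s).flip
    · exact ((IsPullback.of_hasPullback d s).lift_fst _ _ _)
  have w : CommSq f₂ g₂ (pullback.snd c s) (pullback.snd d s) := by
    constructor
    rw [(IsPullback.of_hasPullback c s).lift_snd, (IsPullback.of_hasPullback d s).lift_snd]
  exact ((Adhesive.van_kampen' hpo) f₂ g₂ (pullback.snd c s) (pullback.snd d s)
    (pullback.fst (a ≫ c) s) (pullback.fst c s) (pullback.fst d s) s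
    hback₁ hback₂ ((IsPullback.of_hasPullback c s).flip).toCommSq
    ((IsPullback.of_hasPullback d s).flip).toCommSq w).mpr
    ⟨(IsPullback.of_hasPullback c s).flip, (IsPullback.of_hasPullback d s).flip⟩

/-- If a morphism `s : T ⟶ D` agrees with `u ≫ c` after composing with `x`,
then it agrees with `u ≫ c` already. -/
lemma stmt_8_aux {A B C D E : 𝒞}
    (a : A ⟶ B) (b : A ⟶ C) (c : B ⟶ D) (d : C ⟶ D) (e : B ⟶ E) (f : C ⟶ E)
    [Mono a] [Mono b] [Mono c] [Mono d] [Mono e] [Mono f]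
    (hpo : IsPushout a b c d) (hpb : IsPullback a b e f)
    (x : D ⟶ E) (hx₁ : c ≫ x = e) (hx₂ : d ≫ x = f)
    {T : 𝒞} (u : T ⟶ B) (s : T ⟶ D) (hs : s ≫ x = u ≫ e) : s = u ≫ c := by
  apply (stmt_8_decomp a b c d hpo s).hom_ext
  · -- component through `pullback c s`
    have h1 : pullback.snd c s ≫ s = pullback.fst c s ≫ c := pullback.condition.symm
    have h2 : pullback.snd c s ≫ u = pullback.fst c s := by
      rw [← cancel_mono e, Category.assoc, ← hs, ← hx₁, pullback.condition_assoc]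
    rw [h1, ← Category.assoc, h2]
  · -- component through `pullback d s`
    have h1 : pullback.snd d s ≫ s = pullback.fst d s ≫ d := pullback.condition.symm
    have h3 : (pullback.snd d s ≫ u) ≫ e = pullback.fst d s ≫ f := by
      rw [Category.assoc, ← hs, ← hx₂, pullback.condition_assoc]
    set l := hpb.lift (pullback.snd d s ≫ u) (pullback.fst d s) h3 with hl
    have hla : l ≫ a = pullback.snd d s ≫ u := hpb.lift_fst _ _ _
    have hlb : l ≫ b = pullback.fst d s := hpb.lift_snd _ _ _
    rw [h1, ← hlb, Category.assoc, ← hpo.w, ← Category.assoc, hla, Category.assoc]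

end Aux

/-- Effective unions in adhesive categories: if the inner square is a pushout, the
exterior square is a pullback, and all morphisms except `x` are monomorphisms,
then `x` is a monomorphism. -/
theorem stmt_8 {𝒞 : Type*} [Category 𝒞] [Adhesive 𝒞] {A B C D E : 𝒞}
    (a : A ⟶ B) (b : A ⟶ C) (c : B ⟶ D) (d : C ⟶ D) (e : B ⟶ E) (f : C ⟶ E)
    [Mono a] [Mono b] [Mono c] [Mono d] [Mono e] [Mono f]
    (hpo : IsPushout a b c d) (hpb : IsPullback a b e f)
    (x : D ⟶ E) (hx₁ : c ≫ x = e) (hx₂ : d ≫ x = f) :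
    Mono x := by
  constructor
  intro T t₁ t₂ ht
  apply (stmt_8_decomp a b c d hpo t₁).hom_ext
  · have h1 : pullback.snd c t₁ ≫ t₁ = pullback.fst c t₁ ≫ c := pullback.condition.symm
    have h2 : (pullback.snd c t₁ ≫ t₂) ≫ x = pullback.fst c t₁ ≫ e := by
      rw [Category.assoc, ← ht, ← hx₁, pullback.condition_assoc]
    rw [h1, stmt_8_aux a b c d e f hpo hpb x hx₁ hx₂ (pullback.fst c t₁)
      (pullback.snd c t₁ ≫ t₂) h2]
  · have h1 : pullback.snd d t₁ ≫ t₁ = pullback.fst d t₁ ≫ d := pullback.condition.symm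
    have h2 : (pullback.snd d t₁ ≫ t₂) ≫ x = pullback.fst d t₁ ≫ f := by
      rw [Category.assoc, ← ht, ← hx₂, pullback.condition_assoc]
    rw [h1, stmt_8_aux b a d c f e hpo.flip hpb.flip x hx₂ hx₁ (pullback.fst d t₁)
      (pullback.snd d t₁ ≫ t₂) h2]
end

section
/- Horizontal composition of final pullback complements: given two horizontally composable commutative squares where the left square is an FPC (i.e. (d', b) is FPC of (a, d)) and the right square is an FPC, the composite square is an FPC; conversely, if the left square and the composite square are FPCs, then the right square is an FPC. -/
open CategoryTheory

/-- `(d, b)` is a final pullback complement (FPC) of `(c, a)`: the square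
`a : P ⟶ I`, `b : P ⟶ K`, `c : I ⟶ X`, `d : K ⟶ X` is a pullback, and for every
pullback `(x, y)` of `(c, z)` and `w` with `w ≫ a = x` there is a unique `w*`
with `w* ≫ d = z` and `y ≫ w* = w ≫ b`. -/
structure IsFPC {C : Type*} [CategoryTheory.Category C] {P I K X : C}
    (a : P ⟶ I) (b : P ⟶ K) (c : I ⟶ X) (d : K ⟶ X) : Prop where
  isPullback : CategoryTheory.IsPullback a b c d
  univ : ∀ {Q L : C} (x : Q ⟶ I) (y : Q ⟶ L) (z : L ⟶ X) (w : Q ⟶ P),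
    CategoryTheory.IsPullback x y c z → w ≫ a = x →
    ∃! w' : L ⟶ K, w' ≫ d = z ∧ y ≫ w' = w ≫ b

/-- Horizontal FPC (de-)composition: if the left square is an FPC (`(d', b)` is an
FPC of `(a, d)`), then the composite square is an FPC iff the right square is. -/
theorem stmt_11 {𝒞 : Type*} [Category 𝒞] [Adhesive 𝒞] {A B C A' B' C' : 𝒞}
    (d : B ⟶ A) (e : C ⟶ B) (d' : B' ⟶ A') (e' : C' ⟶ B')
    (a : A ⟶ A') (b : B ⟶ B') (c : C ⟶ C')
    (hL : IsFPC d b a d') (hcomm : e ≫ b = c ≫ e') :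
    IsFPC (e ≫ d) c a (e' ≫ d') ↔ IsFPC e c b e' := by
  constructor
  · intro hC
    refine ⟨hC.isPullback.of_right hcomm hL.isPullback, ?_⟩
    intro Q L x y z w hpb hw
    -- pullback of (a, z ≫ d')
    have hpb' : IsPullback (x ≫ d) y a (z ≫ d') := hpb.paste_horiz hL.isPullback
    obtain ⟨w', ⟨hw'1, hw'2⟩, hw'u⟩ :=
      hC.univ (x ≫ d) y (z ≫ d') w hpb' (by rw [← Category.assoc, hw])
    -- use left FPC uniqueness to show w' ≫ e' = z
    obtain ⟨u, -, hu⟩ := hL.univ (x ≫ d) y (z ≫ d') x hpb' rfl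
    have h1 : w' ≫ e' = z := by
      have e1 : w' ≫ e' = u := hu _ ⟨by rw [Category.assoc, hw'1],
        by rw [← Category.assoc, hw'2, Category.assoc, ← hcomm, ← Category.assoc, hw]⟩
      have e2 : z = u := hu _ ⟨rfl, hpb.w.symm⟩
      rw [e1, e2]
    refine ⟨w', ⟨h1, hw'2⟩, ?_⟩
    rintro v ⟨hv1, hv2⟩
    exact hw'u v ⟨by rw [← Category.assoc, hv1], hv2⟩
  · intro hR
    refine ⟨hR.isPullback.paste_horiz hL.isPullback, ?_⟩
    intro Q L x y z w hpb hw
    -- left FPC gives u : L ⟶ B'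
    obtain ⟨u, ⟨hu1, hu2⟩, huu⟩ := hL.univ x y z (w ≫ e) hpb
      (by rw [Category.assoc, hw])
    -- the square (w ≫ e, y, b, u) is a pullback
    have hpb2 : IsPullback (w ≫ e) y b u := by
      refine IsPullback.of_right ?_ hu2.symm hL.isPullback
      rw [Category.assoc, hw, hu1]; exact hpb
    obtain ⟨w', ⟨hw'1, hw'2⟩, hw'u⟩ := hR.univ (w ≫ e) y u w hpb2 rfl
    refine ⟨w', ⟨by rw [← Category.assoc, hw'1, hu1], hw'2⟩, ?_⟩
    rintro v ⟨hv1, hv2⟩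
    have : v ≫ e' = u := huu _ ⟨by rw [Category.assoc, hv1],
      by rw [← Category.assoc, hv2, Category.assoc, ← hcomm, ← Category.assoc]⟩
    exact hw'u v ⟨this, hv2⟩
end

section
/- Pullback-pushout decomposition in adhesive categories: given two horizontally composable commutative squares (1) (left) and (2) (right) such that the composite square (1)+(2) is a pullback, square (2) is a pushout, square (1) commutes, and the left vertical morphism a is a monomorphism, then square (1) is a pullback. -/
/-!
Let `Q = A ×_{A'} B'` and let `u : B ⟶ Q` be the comparison map induced by square (1).
Pulling the pushout (2) back along `Q ⟶ B'` gives back `C` over `C'` (pasting with the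
composite pullback) and `B` over `B'` (since `a` is mono). As `c` is a pullback of `a`, it is
mono, so (2) is van Kampen and `Q` is the pushout of `B ← C → C`, i.e. `u` is an isomorphism.
-/

open CategoryTheory Limits

section

variable {𝒞 : Type*} [Category 𝒞]

lemma IsPullback.of_id_snd_of_mono {B A A' : 𝒞} (d : B ⟶ A) (a : A ⟶ A') [Mono a] :
    IsPullback d (𝟙 B) a (d ≫ a) := by
  simpa using IsPullback.of_id_snd.paste_horiz (IsKernelPair.id_of_mono a)

lemma IsPushout.IsVanKampen.isIso_of_isPullback_of_isPullback {C B C' B' Q : 𝒞}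
    {e : C ⟶ B} {c : C ⟶ C'} {b : B ⟶ B'} {e' : C' ⟶ B'} [Mono c] {H : IsPushout e c b e'}
    (H' : H.IsVanKampen) {q : Q ⟶ B'} {u : B ⟶ Q}
    (hB : IsPullback u (𝟙 B) q b) (hC : IsPullback (e ≫ u) c q e') : IsIso u := by
  have htop : IsPushout e (𝟙 C) u (e ≫ u) :=
    (H' e (𝟙 C) u (e ≫ u) (𝟙 C) (𝟙 B) c q IsPullback.of_id_snd (IsKernelPair.id_of_mono c)
      hB.toCommSq hC.toCommSq ⟨by simp⟩).mpr ⟨hB, hC⟩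
  exact htop.isIso_inl_of_isIso

end

/-- Pullback-pushout decomposition in adhesive categories: if the composite square
is a pullback, the right square is a pushout, the left square commutes, and `a` is
a monomorphism, then the left square is a pullback. -/
theorem stmt_18 {𝒞 : Type*} [Category 𝒞] [Adhesive 𝒞] {A B C A' B' C' : 𝒞}
    (d : B ⟶ A) (e : C ⟶ B) (d' : B' ⟶ A') (e' : C' ⟶ B')
    (a : A ⟶ A') (b : B ⟶ B') (c : C ⟶ C') [Mono a]
    (hpb : IsPullback (e ≫ d) c a (e' ≫ d'))
    (hpo : IsPushout e c b e')
    (hcomm : d ≫ a = b ≫ d') :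
    IsPullback d b a d' := by
  have : Mono c := hpb.mono_snd_of_mono
  have : HasPullback a d' := Adhesive.hasPullback_of_mono_left a d'
  let u : B ⟶ pullback a d' := pullback.lift d b hcomm
  have hu_fst : u ≫ pullback.fst a d' = d := pullback.lift_fst _ _ _
  have hu_snd : u ≫ pullback.snd a d' = b := pullback.lift_snd _ _ _
  have hB : IsPullback u (𝟙 B) (pullback.snd a d') b := by
    refine IsPullback.of_right ?_ (by simp [hu_snd]) (IsPullback.of_hasPullback a d')
    simpa [hu_fst, hcomm] using IsPullback.of_id_snd_of_mono d a
  have hC : IsPullback (e ≫ u) c (pullback.snd a d') e' := by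
    refine IsPullback.of_right ?_ (by simp [hu_snd, hpo.w]) (IsPullback.of_hasPullback a d')
    simpa [hu_fst] using hpb
  have : IsIso u :=
    IsPushout.IsVanKampen.isIso_of_isPullback_of_isPullback (Adhesive.van_kampen' hpo) hB hC
  exact IsPullback.of_iso_pullback ⟨hcomm⟩ (asIso u) hu_fst hu_snd
end
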